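/- The sequence v_n of approximants of the radical 1 + sqrt(2 + cbrt(3 + ...)) (with a_k = r_k = k) converges to a limit v, and for all n ≥ 2, 0 ≤ v - v_n ≤ 3^{1/3} / ((n-1)·(n-1)!). -/

import Mathlib

/-- `rad a r n i = (a i + (a (i+1) + ⋯ + (a n) ^ (1/r n)) ^ (1/r (i+1))) ^ (1/r i)`. -/
noncomputable def rad (a : ℕ → ℝ) (r : ℕ → ℕ) (n : ℕ) : ℕ → ℝ
  | i => if _ : i ≤ n then (a i + rad a r n (i + 1)) ^ ((r i : ℝ)⁻¹) else 0
termination_by i => n + 1 - i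
decreasing_by omega

/-- The `n`-th approximant of `1 + sqrt (2 + (3 + (4 + ⋯) ^ (1/4)) ^ (1/3))`,
with `a k = r k = k`. -/
noncomputable def v (n : ℕ) : ℝ := rad (fun k => (k : ℝ)) (fun k => k) n 1

/-!
Adding one more level to the radical changes the innermost term `rad n (n + 1) = 0` into
`(n + 1) ^ (1 / (n + 1)) ≤ 3 ^ (1 / 3)`. Going outwards, each root `x ↦ x ^ (1 / i)` is concave
with slope at most `1 / i` on `[1, ∞)`, so the change shrinks by a factor `1 / i` at level `i`.
Hence `v (n + 1) - v n ≤ 3 ^ (1 / 3) / n !`, and `v` is increasing and converges, with tail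
bounded by `3 ^ (1 / 3)` times the tail `∑_{k ≥ n} 1 / k !` of the series of `e`.
-/

open Finset Filter Topology
open scoped Nat

theorem rpow_add_le_rpow_add_mul {t u p : ℝ} (ht : 1 ≤ t) (hu : 0 ≤ u) (hp0 : 0 ≤ p) (hp1 : p ≤ 1) :
    (t + u) ^ p ≤ t ^ p + p * u := by
  have ht0 : 0 < t := one_pos.trans_le ht
  have hsplit : (t + u) ^ p = t ^ p * (1 + u / t) ^ p := by
    rw [← Real.mul_rpow ht0.le (by positivity), mul_add, mul_div_cancel₀ _ ht0.ne', mul_one]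
  have hbern : (1 + u / t) ^ p ≤ 1 + p * (u / t) :=
    rpow_one_add_le_one_add_mul_self (by linarith [div_nonneg hu ht0.le]) hp0 hp1
  have hpow : t ^ (p - 1) ≤ 1 := Real.rpow_le_one_of_one_le_of_nonpos ht (by linarith)
  calc (t + u) ^ p ≤ t ^ p * (1 + p * (u / t)) := by
        rw [hsplit]; exact mul_le_mul_of_nonneg_left hbern (by positivity)
    _ = t ^ p + p * u * t ^ (p - 1) := by rw [Real.rpow_sub ht0, Real.rpow_one]; ring
    _ ≤ t ^ p + p * u := by nlinarith [mul_nonneg hp0 hu]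

section rad

variable {a : ℕ → ℝ} {r : ℕ → ℕ} {n : ℕ}

theorem rad_of_le {i : ℕ} (h : i ≤ n) :
    rad a r n i = (a i + rad a r n (i + 1)) ^ ((r i : ℝ)⁻¹) := by
  rw [rad, dif_pos h]

theorem rad_of_lt {i : ℕ} (h : n < i) : rad a r n i = 0 := by
  rw [rad, dif_neg (by omega)]

theorem rad_nonneg {i : ℕ} (ha : ∀ j ≥ i, 0 ≤ a j) : 0 ≤ rad a r n i := by
  rcases le_or_gt i n with h | h
  · rw [rad_of_le h]
    have := rad_nonneg (i := i + 1) fun j hj => ha j (by omega)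
    exact Real.rpow_nonneg (add_nonneg (ha i le_rfl) this) _
  · rw [rad_of_lt h]
termination_by n + 1 - i

theorem rad_le_rad_succ {i : ℕ} (ha : ∀ j ≥ i, 0 ≤ a j) : rad a r n i ≤ rad a r (n + 1) i := by
  rcases le_or_gt i n with h | h
  · rw [rad_of_le h, rad_of_le (n := n + 1) (by omega)]
    have := rad_le_rad_succ (i := i + 1) fun j hj => ha j (by omega)
    have := rad_nonneg (r := r) (n := n) (i := i + 1) fun j hj => ha j (by omega)
    gcongr
    linarith [ha i le_rfl]
  · rw [rad_of_lt h]
    exact rad_nonneg ha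
termination_by n + 1 - i

theorem rad_succ_sub_rad_le {i : ℕ} (hi : i ≤ n + 1)
    (ha : ∀ j ≥ i, 1 ≤ a j) (hr : ∀ j ≥ i, 1 ≤ r j) :
    rad a r (n + 1) i - rad a r n i ≤
      (∏ j ∈ Ico i (n + 1), (r j : ℝ)⁻¹) * a (n + 1) ^ ((r (n + 1) : ℝ)⁻¹) := by
  rcases hi.lt_or_eq with hi | rfl
  · have ih := rad_succ_sub_rad_le (i := i + 1) (by omega) (fun j hj => ha j (by omega))
      fun j hj => hr j (by omega)
    have ha₀ : ∀ j ≥ i + 1, 0 ≤ a j := fun j hj => zero_le_one.trans (ha j (by omega))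
    have hmono := rad_le_rad_succ (r := r) (n := n) ha₀
    have hbase : 1 ≤ a i + rad a r n (i + 1) :=
      le_add_of_le_of_nonneg (ha i le_rfl) (rad_nonneg ha₀)
    have hp₁ : (r i : ℝ)⁻¹ ≤ 1 := inv_le_one_of_one_le₀ (by exact_mod_cast hr i le_rfl)
    have hconc := rpow_add_le_rpow_add_mul hbase (sub_nonneg.2 hmono) (by positivity) hp₁
    rw [add_add_sub_cancel] at hconc
    rw [rad_of_le (n := n + 1) (by omega), rad_of_le (by omega : i ≤ n),
      prod_eq_prod_Ico_succ_bot hi, mul_assoc]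
    calc _ ≤ (r i : ℝ)⁻¹ * (rad a r (n + 1) (i + 1) - rad a r n (i + 1)) := by linarith
      _ ≤ _ := mul_le_mul_of_nonneg_left ih (by positivity)
  · rw [rad_of_le le_rfl, rad_of_lt (Nat.lt_succ_self _), rad_of_lt (Nat.lt_succ_self _)]
    simp
termination_by n + 1 - i

end rad

theorem cube_le_three_pow (k : ℕ) : k ^ 3 ≤ 3 ^ k := by
  induction k with
  | zero => simp
  | succ m ih =>
    rcases lt_or_ge m 3 with h | h
    · interval_cases m <;> norm_num
    · calc (m + 1) ^ 3 ≤ 3 * m ^ 3 := by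
            nlinarith [Nat.mul_le_mul h h, Nat.mul_le_mul (Nat.mul_le_mul h h) h]
        _ ≤ 3 * 3 ^ m := by omega
        _ = 3 ^ (m + 1) := by ring

theorem natCast_rpow_inv_self_le (k : ℕ) : (k : ℝ) ^ (k : ℝ)⁻¹ ≤ (3 : ℝ) ^ (3 : ℝ)⁻¹ := by
  rcases k.eq_zero_or_pos with rfl | hk
  · simpa using Real.one_le_rpow (by norm_num : (1 : ℝ) ≤ 3) (by norm_num)
  rw [Real.rpow_inv_le_iff_of_pos (by positivity) (by positivity) (by positivity),
    ← Real.rpow_mul (by norm_num), mul_comm, Real.rpow_mul (by norm_num),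
    Real.le_rpow_inv_iff_of_pos (by positivity) (by positivity) (by norm_num)]
  exact_mod_cast cube_le_three_pow k

theorem monotone_v : Monotone v :=
  monotone_nat_of_le_succ fun _ => rad_le_rad_succ fun j _ => Nat.cast_nonneg j

theorem v_succ_sub_le (n : ℕ) : v (n + 1) - v n ≤ (3 : ℝ) ^ (3 : ℝ)⁻¹ / n ! := by
  have hdiff := rad_succ_sub_rad_le (a := fun k => (k : ℝ)) (r := fun k => k) (n := n) (i := 1)
    (by omega) (fun j hj => by simpa using hj) (fun j hj => hj)
  have hprod : ∏ j ∈ Ico 1 (n + 1), (j : ℝ)⁻¹ = (n ! : ℝ)⁻¹ := by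
    rw [prod_inv_distrib, ← Nat.cast_prod, prod_Ico_id_eq_factorial]
  rw [hprod] at hdiff
  calc v (n + 1) - v n ≤ (n ! : ℝ)⁻¹ * ((n + 1 : ℕ) : ℝ) ^ ((n + 1 : ℕ) : ℝ)⁻¹ := hdiff
    _ ≤ (n ! : ℝ)⁻¹ * (3 : ℝ) ^ (3 : ℝ)⁻¹ :=
      mul_le_mul_of_nonneg_left (natCast_rpow_inv_self_le _) (by positivity)
    _ = _ := by rw [div_eq_inv_mul]

theorem sum_Ico_inv_factorial_le {n : ℕ} (hn : 2 ≤ n) (m : ℕ) :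
    ∑ k ∈ Ico n m, (k ! : ℝ)⁻¹ ≤ (((n : ℝ) - 1) * ((n - 1)! : ℝ))⁻¹ := by
  have htail := Complex.sum_div_factorial_le (α := ℝ) n m (by omega)
  rw [range_eq_Ico, Ico_filter_le, max_eq_right (Nat.zero_le n)] at htail
  simp only [one_div] at htail
  refine htail.trans ?_
  obtain ⟨k, rfl⟩ : ∃ k, n = k + 2 := ⟨n - 2, by omega⟩
  rw [show k + 2 - 1 = k + 1 by omega, Nat.factorial_succ (k + 1)]
  push_cast
  rw [show (k : ℝ) + 2 - 1 = k + 1 by ring, ← one_div,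
    div_le_div_iff₀ (by positivity) (by positivity)]
  nlinarith

theorem sub_le_of_forall_succ_sub_le_div_factorial {u : ℕ → ℝ} {C : ℝ} (hC : 0 ≤ C)
    (hu : ∀ k, u (k + 1) - u k ≤ C / k !) {n m : ℕ} (hn : 2 ≤ n) (hnm : n ≤ m) :
    u m - u n ≤ C / (((n : ℝ) - 1) * ((n - 1)! : ℝ)) := by
  calc u m - u n = ∑ k ∈ Ico n m, (u (k + 1) - u k) := (sum_Ico_sub u hnm).symm
    _ ≤ ∑ k ∈ Ico n m, C * (k ! : ℝ)⁻¹ := sum_le_sum fun k _ => div_eq_mul_inv C _ ▸ hu k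
    _ = C * ∑ k ∈ Ico n m, (k ! : ℝ)⁻¹ := (mul_sum _ _ _).symm
    _ ≤ C * (((n : ℝ) - 1) * ((n - 1)! : ℝ))⁻¹ :=
      mul_le_mul_of_nonneg_left (sum_Ico_inv_factorial_le hn m) hC
    _ = _ := (div_eq_mul_inv _ _).symm

theorem Monotone.exists_tendsto_of_sub_le {u ε : ℕ → ℝ} (hu : Monotone u) {N : ℕ}
    (h : ∀ n ≥ N, ∀ m ≥ n, u m - u n ≤ ε n) :
    ∃ L, Tendsto u atTop (𝓝 L) ∧ ∀ n ≥ N, 0 ≤ L - u n ∧ L - u n ≤ ε n := by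
  have hbdd : BddAbove (Set.range u) := by
    refine ⟨u N + ε N, ?_⟩
    rintro _ ⟨m, rfl⟩
    linarith [h N le_rfl (max m N) (le_max_right m N), hu (le_max_left m N)]
  have hL := tendsto_atTop_ciSup hu hbdd
  refine ⟨_, hL, fun n hn => ⟨sub_nonneg.2 (hu.ge_of_tendsto hL n), ?_⟩⟩
  have hle : (⨆ i, u i) ≤ u n + ε n :=
    _root_.le_of_tendsto hL (eventually_atTop.2 ⟨n, fun m hm => by linarith [h n hn m hm]⟩)
  linarith

theorem example_radical_convergence :
    ∃ L : ℝ, Filter.Tendsto v Filter.atTop (nhds L) ∧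
      ∀ n, 2 ≤ n →
        0 ≤ L - v n ∧
        L - v n ≤ (3 : ℝ) ^ ((3 : ℝ)⁻¹) / (((n : ℝ) - 1) * (Nat.factorial (n - 1) : ℝ)) := by
  exact monotone_v.exists_tendsto_of_sub_le fun _ hn _ hnm =>
    sub_le_of_forall_succ_sub_le_div_factorial (by positivity) v_succ_sub_le hn hnm
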